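/- Let k ≥ 2, let M be a conic minion of depth d, let X, A be k-enhanced σ-structures, and let ξ : X^⊗k → F_M(A^⊗k) be a homomorphism. Let R ∈ σ of arity r, x ∈ R^X, a ∈ R^A with x ⊀ a, and let Q ∈ M^(|R^A|) satisfy P_i Q = ξ(x_i) for all i ∈ [r]^k. Then the a-th row of Q is the zero vector of length d. -/

import Mathlib

/-- A relational signature: a type of symbols, each with an index type (its arity set). -/
structure Sig where
  symb : Type
  idx : symb → Type

/-- A relational structure over a signature. -/
structure Str (σ : Sig) where
  dom : Type
  rel : ∀ R : σ.symb, Set (σ.idx R → dom)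

/-- Homomorphisms of relational structures. -/
def IsHom {σ : Sig} (A B : Str σ) (f : A.dom → B.dom) : Prop :=
  ∀ (R : σ.symb) (t : σ.idx R → A.dom), t ∈ A.rel R → (fun i => f (t i)) ∈ B.rel R

/-- The tensorised signature. -/
def tensSig (σ : Sig) (ι : Type) : Sig := ⟨σ.symb, fun R => ι → σ.idx R⟩

/-- The `k`-th tensor power of a structure (with `ι` playing the role of `[k]`). -/
def tpow {σ : Sig} (A : Str σ) (ι : Type) : Str (tensSig σ ι) where
  dom := ι → A.dom
  rel R := { T | ∃ a ∈ A.rel R, T = fun i j => a (i j) }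

/-- Left multiplication of a matrix `M : I × d → S` by the 0/1 matrix of `π : I → J`:
the `j`-th row of the result is the sum of the rows of `M` over the preimage `π⁻¹(j)`. -/
noncomputable def pushMatrix {S : Type} [Semiring S] {I J d : Type}
    (π : I → J) (M : I → d → S) : J → d → S :=
  fun j c => ∑ᶠ (i : I) (_ : π i = j), M i c

/-- A linear minion over a semiring `S` with columns indexed by the depth type `d`:
a family of sets of `I × d` matrices, nonempty for nonempty finite `I`, closed under
the minor operations `M ↦ P M`. -/
structure LinMinion (S : Type) [Semiring S] (d : Type) where
  elem : ∀ I : Type, Set (I → d → S)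
  nonempty : ∀ I : Type, Nonempty I → Finite I → (elem I).Nonempty
  minor_mem : ∀ {I J : Type}, Finite I → ∀ (π : I → J) (M : I → d → S),
    M ∈ elem I → pushMatrix π M ∈ elem J

/-- The free structure of a linear minion generated by a structure `A`:
domain `𝕄^(|A|)`, and a tuple `t` is in `R^{F_𝕄(A)}` iff there is `Q ∈ 𝕄^(|R^A|)`
with `t i = P_i Q` for each coordinate `i`, where `P_i` has `(a,b)`-entry `1` iff `b_i = a`. -/
noncomputable def LinFree {S : Type} [Semiring S] {d : Type} (𝕄 : LinMinion S d)
    {σ : Sig} (A : Str σ) : Str σ where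
  dom := { M : A.dom → d → S // M ∈ 𝕄.elem A.dom }
  rel R := { t | ∃ Q : ↥(A.rel R) → d → S, Q ∈ 𝕄.elem ↥(A.rel R) ∧
      ∀ i : σ.idx R, (t i).1 = fun a c => ∑ᶠ (b : ↥(A.rel R)) (_ : b.1 i = a), Q b c }

/-- Conicity for a family of matrix sets: every element (over a nonempty finite index
type) is nonzero, and any subset of its rows summing to zero consists of zero rows. -/
def ConicFam {S : Type} [Semiring S] {d : Type} (E : ∀ I : Type, Set (I → d → S)) : Prop :=
  ∀ I : Type, Finite I → Nonempty I → ∀ M ∈ E I,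
    M ≠ 0 ∧ ∀ V : Set I, (∑ᶠ i ∈ V, M i) = 0 → ∀ i ∈ V, M i = 0

/-!
Pick `p ≠ q` in `[k]` and compare the index tuples `i₁ = (α, …, α, β)` (with `β` at `q`) and
`i₂ = (α, …, α)`. As `x_α = x_β`, they give the same point of `X^⊗k`, so `P_{i₁} Q = ξ(x_{i₁}) =
P_{i₂} Q`. The row `a_{i₁}` of `P_{i₂} Q` is an empty sum, since every `a'_{i₂}` is constant while
`a_α ≠ a_β`. Hence the rows of `Q` in the fibre of `a_{i₁}` under `a' ↦ a'_{i₁}`, which contains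
`a`, sum to zero, and conicity makes each of them zero.
-/

section PushMatrix

variable {S : Type} [Semiring S] {I J d : Type}

theorem pushMatrix_apply_eq_finsum_mem [Finite I] (π : I → J) (M : I → d → S) (j : J) :
    pushMatrix π M j = ∑ᶠ i ∈ π ⁻¹' {j}, M i := by
  have := Fintype.ofFinite I
  ext c
  rw [finsum_mem_eq_finite_toFinset_sum _ (Set.toFinite _), Finset.sum_apply,
    ← finsum_mem_eq_finite_toFinset_sum (fun i => M i c) (Set.toFinite _)]
  rfl

theorem pushMatrix_apply_eq_zero_of_notMem_range (π : I → J) (M : I → d → S) {j : J}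
    (hj : j ∉ Set.range π) : pushMatrix π M j = 0 := by
  ext c
  exact finsum_eq_zero_of_forall_eq_zero fun i =>
    @finsum_of_isEmpty _ _ _ ⟨fun h => hj ⟨i, h⟩⟩ _

theorem ConicFam.apply_eq_zero_of_pushMatrix_eq {E : ∀ I : Type, Set (I → d → S)}
    (hE : ConicFam E) [Finite I] {M : I → d → S} (hM : M ∈ E I) {π₁ π₂ : I → J}
    (h : pushMatrix π₁ M = pushMatrix π₂ M) {i : I} (hi : π₁ i ∉ Set.range π₂) : M i = 0 := by
  have hfibre : ∑ᶠ i' ∈ π₁ ⁻¹' {π₁ i}, M i' = 0 := by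
    rw [← pushMatrix_apply_eq_finsum_mem, h, pushMatrix_apply_eq_zero_of_notMem_range _ _ hi]
  exact (hE I ‹_› ⟨i⟩ M hM).2 _ hfibre i rfl

end PushMatrix

/-- for a conic minion `𝕄`, level `k ≥ 2`, a homomorphism
`ξ : X^⊗k → F_𝕄(A^⊗k)`, `x ∈ R^X`, `a ∈ R^A` with `x ⊀ a`, and a witness
`Q ∈ 𝕄^(|R^A|)` with `P_i Q = ξ(x_i)` for all `i ∈ [r]^k`, the `a`-th row of `Q` is zero. -/
theorem stmt15 {S d : Type} [Semiring S] {σ : Sig} (𝕄 : LinMinion S d)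
    (hconic : ConicFam 𝕄.elem) {k : ℕ} (hk : 2 ≤ k)
    (X A : Str σ) [Finite X.dom] [Finite A.dom] [∀ R : σ.symb, Finite (σ.idx R)]
    (Rk : σ.symb) (he : Nonempty (σ.idx Rk ≃ Fin k))
    (hX : X.rel Rk = Set.univ) (hA : A.rel Rk = Set.univ)
    (ξ : (tpow X (σ.idx Rk)).dom → (LinFree 𝕄 (tpow A (σ.idx Rk))).dom)
    (hξ : IsHom (tpow X (σ.idx Rk)) (LinFree 𝕄 (tpow A (σ.idx Rk))) ξ)
    (R : σ.symb) (x : σ.idx R → X.dom) (hx : x ∈ X.rel R)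
    (a : σ.idx R → A.dom) (ha : a ∈ A.rel R)
    (hxa : ¬ ∀ α β : σ.idx R, x α = x β → a α = a β)
    (Q : ↥(A.rel R) → d → S) (hQ : Q ∈ 𝕄.elem ↥(A.rel R))
    (hPQ : ∀ i : σ.idx Rk → σ.idx R,
      (ξ (fun j => x (i j))).1 = fun b c =>
        ∑ᶠ (a' : ↥(A.rel R)) (_ : (fun j => a'.1 (i j)) = b), Q a' c) :
    Q ⟨a, ha⟩ = 0 := by
  classical
  push Not at hxa
  obtain ⟨α, β, hxαβ, haαβ⟩ := hxa
  have : Nontrivial (Fin k) := Fin.nontrivial_iff_two_le.2 hk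
  have : Nontrivial (σ.idx Rk) := he.some.nontrivial
  obtain ⟨p, q, hpq⟩ := exists_pair_ne (σ.idx Rk)
  let i₁ : σ.idx Rk → σ.idx R := Function.update (fun _ => α) q β
  let i₂ : σ.idx Rk → σ.idx R := fun _ => α
  have hminor : pushMatrix (fun a' : ↥(A.rel R) => a'.1 ∘ i₁) Q =
      pushMatrix (fun a' : ↥(A.rel R) => a'.1 ∘ i₂) Q := by
    have hxi : (fun j => x (i₁ j)) = fun j => x (i₂ j) :=
      (Function.comp_update x _ q β).trans (Function.update_eq_self_iff.2 hxαβ.symm)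
    exact (hPQ i₁).symm.trans (by rw [hxi]; exact hPQ i₂)
  refine hconic.apply_eq_zero_of_pushMatrix_eq hQ hminor ?_
  rintro ⟨a', ha'⟩
  have hp : i₁ p = α := Function.update_of_ne hpq _ _
  have hq : i₁ q = β := Function.update_self _ _ _
  exact haαβ (by simpa [hp, hq, i₂] using (congrFun ha' p).symm.trans (congrFun ha' q))
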